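/- Every relativistically causal bilocal (RCBL) tripartite box P with inputs x,y,z ∈ {1,2} and binary outputs satisfies the inequality I_RCBL := 2⟨A₁B₁⟩ + ⟨A₁C₁⟩_{y=1} + ⟨A₁C₁⟩_{y=2} + 2⟨B₁C₂⟩ − 2⟨A₂B₂C₁⟩ + 2⟨A₂B₂C₂⟩ ≤ 6, where ⟨A_xB_yC_z⟩ := Σ (−1)^{a+b+c} P(a,b,c|x,y,z), ⟨A_xB_y⟩ := Σ (−1)^{a+b} Σ_c P(a,b,c|x,y,z) (independent of z), ⟨B_yC_z⟩ := Σ (−1)^{b+c} Σ_a P(a,b,c|x,y,z) (independent of x), and ⟨A_xC_z⟩_y := Σ (−1)^{a+c} Σ_b P(a,b,c|x,y,z), which may depend on Bob's input y. -/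
import Mathlib


open Finset

/-- sign `(−1)^a` of a binary outcome. -/
def sgn (b : Bool) : ℝ := if b then -1 else 1

/-- A tripartite box `P x y z a b c` (inputs `1, 2` encoded as `false, true`) is
*relativistically causal bilocal* (RCBL) if it admits a convex decomposition into:
a mixture of `A-B` no-signaling bipartite boxes times single-party boxes for `C`;
a mixture of `A-C` boxes whose joint distribution may depend on Bob's input `y`
but whose marginals depend only on the local inputs, times single-party boxes for `B`;
and a mixture of `B-C` no-signaling bipartite boxes times single-party boxes for `A`. -/
def IsRCBL (P : Bool → Bool → Bool → Bool → Bool → Bool → ℝ) : Prop :=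
  ∃ (r₁ r₂ r₃ : ℝ) (n₁ n₂ n₃ : ℕ)
    (q₁ : Fin n₁ → ℝ) (PAB : Fin n₁ → Bool → Bool → Bool → Bool → ℝ)
    (PC : Fin n₁ → Bool → Bool → ℝ)
    (q₂ : Fin n₂ → ℝ) (PAC : Fin n₂ → Bool → Bool → Bool → Bool → Bool → ℝ)
    (PB : Fin n₂ → Bool → Bool → ℝ)
    (q₃ : Fin n₃ → ℝ) (PBC : Fin n₃ → Bool → Bool → Bool → Bool → ℝ)
    (PA : Fin n₃ → Bool → Bool → ℝ),
    0 ≤ r₁ ∧ 0 ≤ r₂ ∧ 0 ≤ r₃ ∧ r₁ + r₂ + r₃ = 1 ∧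
    (∀ l, 0 ≤ q₁ l) ∧ (∑ l, q₁ l = 1) ∧
    (∀ g, 0 ≤ q₂ g) ∧ (∑ g, q₂ g = 1) ∧
    (∀ u, 0 ≤ q₃ u) ∧ (∑ u, q₃ u = 1) ∧
    -- P^λ_{AB} : no-signaling bipartite boxes
    (∀ l x y a b, 0 ≤ PAB l x y a b) ∧ (∀ l x y, ∑ a, ∑ b, PAB l x y a b = 1) ∧
    (∀ l x y y' a, ∑ b, PAB l x y a b = ∑ b, PAB l x y' a b) ∧
    (∀ l x x' y b, ∑ a, PAB l x y a b = ∑ a, PAB l x' y a b) ∧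
    -- P^λ_C : single-party boxes
    (∀ l z c, 0 ≤ PC l z c) ∧ (∀ l z, ∑ c, PC l z c = 1) ∧
    -- P^γ_{AC} : boxes on (a,c) given (x,y,z); Σ_c depends only on (a,x),
    -- Σ_a depends only on (c,z)
    (∀ g x y z a c, 0 ≤ PAC g x y z a c) ∧ (∀ g x y z, ∑ a, ∑ c, PAC g x y z a c = 1) ∧
    (∀ g x y y' z z' a, ∑ c, PAC g x y z a c = ∑ c, PAC g x y' z' a c) ∧
    (∀ g x x' y y' z c, ∑ a, PAC g x y z a c = ∑ a, PAC g x' y' z a c) ∧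
    -- P^γ_B : single-party boxes
    (∀ g y b, 0 ≤ PB g y b) ∧ (∀ g y, ∑ b, PB g y b = 1) ∧
    -- P^υ_{BC} : no-signaling bipartite boxes
    (∀ u y z b c, 0 ≤ PBC u y z b c) ∧ (∀ u y z, ∑ b, ∑ c, PBC u y z b c = 1) ∧
    (∀ u y z z' b, ∑ c, PBC u y z b c = ∑ c, PBC u y z' b c) ∧
    (∀ u y y' z c, ∑ b, PBC u y z b c = ∑ b, PBC u y' z b c) ∧
    -- P^υ_A : single-party boxes
    (∀ u x a, 0 ≤ PA u x a) ∧ (∀ u x, ∑ a, PA u x a = 1) ∧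
    -- the decomposition
    (∀ x y z a b c, P x y z a b c =
      r₁ * (∑ l, q₁ l * (PAB l x y a b * PC l z c)) +
      r₂ * (∑ g, q₂ g * (PAC g x y z a c * PB g y b)) +
      r₃ * (∑ u, q₃ u * (PBC u y z b c * PA u x a)))

/-- Three-party correlator `⟨A_x B_y C_z⟩`. -/
def corr3 (P : Bool → Bool → Bool → Bool → Bool → Bool → ℝ) (x y z : Bool) : ℝ :=
  ∑ a, ∑ b, ∑ c, sgn a * sgn b * sgn c * P x y z a b c

/-- `⟨A_x B_y⟩`, computed from the Alice–Bob marginal (independent of `z`,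
evaluated at `z = false`). -/
def corrAB (P : Bool → Bool → Bool → Bool → Bool → Bool → ℝ) (x y : Bool) : ℝ :=
  ∑ a, ∑ b, sgn a * sgn b * ∑ c, P x y false a b c

/-- `⟨B_y C_z⟩`, computed from the Bob–Charlie marginal (independent of `x`,
evaluated at `x = false`). -/
def corrBC (P : Bool → Bool → Bool → Bool → Bool → Bool → ℝ) (y z : Bool) : ℝ :=
  ∑ b, ∑ c, sgn b * sgn c * ∑ a, P false y z a b c

/-- `⟨A_x C_z⟩_y`, which may depend on Bob's input `y`. -/
def corrAC (P : Bool → Bool → Bool → Bool → Bool → Bool → ℝ) (x z y : Bool) : ℝ :=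
  ∑ a, ∑ c, sgn a * sgn c * ∑ b, P x y z a b c

/-- **The RCBL inequality.** Every relativistically causal bilocal tripartite box
satisfies `I_RCBL := 2⟨A₁B₁⟩ + ⟨A₁C₁⟩_{y=1} + ⟨A₁C₁⟩_{y=2} + 2⟨B₁C₂⟩
− 2⟨A₂B₂C₁⟩ + 2⟨A₂B₂C₂⟩ ≤ 6`. -/

lemma sgn_false : sgn false = 1 := rfl
lemma sgn_true : sgn true = -1 := rfl

def Jf (P : Bool → Bool → Bool → Bool → Bool → Bool → ℝ) : ℝ :=
  2 * corrAB P false false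
      + corrAC P false false false + corrAC P false false true
      + 2 * corrBC P false true
      - 2 * corr3 P true true false + 2 * corr3 P true true true

lemma corr3_mix {n : ℕ} (q : Fin n → ℝ) (B : Fin n → Bool → Bool → Bool → Bool → Bool → Bool → ℝ)
    (x y z : Bool) :
    corr3 (fun x y z a b c => ∑ i, q i * B i x y z a b c) x y z
      = ∑ i, q i * corr3 (B i) x y z := by
  simp only [corr3, Fintype.sum_bool, mul_add, Finset.mul_sum, ← Finset.sum_add_distrib]
  exact Finset.sum_congr rfl fun i _ => by ring

lemma corrAB_mix {n : ℕ} (q : Fin n → ℝ) (B : Fin n → Bool → Bool → Bool → Bool → Bool → Bool → ℝ)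
    (x y : Bool) :
    corrAB (fun x y z a b c => ∑ i, q i * B i x y z a b c) x y
      = ∑ i, q i * corrAB (B i) x y := by
  simp only [corrAB, Fintype.sum_bool, mul_add, Finset.mul_sum, ← Finset.sum_add_distrib]
  exact Finset.sum_congr rfl fun i _ => by ring

lemma corrBC_mix {n : ℕ} (q : Fin n → ℝ) (B : Fin n → Bool → Bool → Bool → Bool → Bool → Bool → ℝ)
    (y z : Bool) :
    corrBC (fun x y z a b c => ∑ i, q i * B i x y z a b c) y z
      = ∑ i, q i * corrBC (B i) y z := by
  simp only [corrBC, Fintype.sum_bool, mul_add, Finset.mul_sum, ← Finset.sum_add_distrib]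
  exact Finset.sum_congr rfl fun i _ => by ring

lemma corrAC_mix {n : ℕ} (q : Fin n → ℝ) (B : Fin n → Bool → Bool → Bool → Bool → Bool → Bool → ℝ)
    (x z y : Bool) :
    corrAC (fun x y z a b c => ∑ i, q i * B i x y z a b c) x z y
      = ∑ i, q i * corrAC (B i) x z y := by
  simp only [corrAC, Fintype.sum_bool, mul_add, Finset.mul_sum, ← Finset.sum_add_distrib]
  exact Finset.sum_congr rfl fun i _ => by ring

lemma Jf_mix {n : ℕ} (q : Fin n → ℝ) (B : Fin n → Bool → Bool → Bool → Bool → Bool → Bool → ℝ) :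
    Jf (fun x y z a b c => ∑ i, q i * B i x y z a b c) = ∑ i, q i * Jf (B i) := by
  simp only [Jf, corr3_mix, corrAB_mix, corrBC_mix, corrAC_mix, Finset.mul_sum,
    ← Finset.sum_add_distrib, ← Finset.sum_sub_distrib]
  exact Finset.sum_congr rfl fun i _ => by ring

lemma Jf_comb (f g h : Bool → Bool → Bool → Bool → Bool → Bool → ℝ) (r₁ r₂ r₃ : ℝ) :
    Jf (fun x y z a b c => r₁ * f x y z a b c + r₂ * g x y z a b c + r₃ * h x y z a b c)
      = r₁ * Jf f + r₂ * Jf g + r₃ * Jf h := by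
  simp only [Jf, corr3, corrAB, corrBC, corrAC, Fintype.sum_bool]
  ring

lemma sum_bound {n : ℕ} (q : Fin n → ℝ) (f : Fin n → ℝ) (hq : ∀ i, 0 ≤ q i)
    (hqs : ∑ i, q i = 1) (hf : ∀ i, f i ≤ 6) : ∑ i, q i * f i ≤ 6 := by
  calc ∑ i, q i * f i ≤ ∑ i, q i * 6 :=
        Finset.sum_le_sum fun i _ => mul_le_mul_of_nonneg_left (hf i) (hq i)
    _ = 6 := by rw [← Finset.sum_mul, hqs, one_mul]

lemma mul_le_abs {g S : ℝ} (h1 : -1 ≤ g) (h2 : g ≤ 1) : g * S ≤ |S| := by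
  calc g * S ≤ |g * S| := le_abs_self _
    _ = |g| * |S| := abs_mul _ _
    _ ≤ 1 * |S| := mul_le_mul_of_nonneg_right (abs_le.mpr ⟨h1, h2⟩) (abs_nonneg _)
    _ = |S| := one_mul _
lemma mul_le_abs' {g S : ℝ} (h1 : -1 ≤ g) (h2 : g ≤ 1) : g * S ≤ |S| := by
  calc g * S ≤ |g * S| := le_abs_self _
    _ = |g| * |S| := abs_mul _ _
    _ ≤ 1 * |S| := mul_le_mul_of_nonneg_right (abs_le.mpr ⟨h1, h2⟩) (abs_nonneg _)
    _ = |S| := one_mul _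

lemma core1 (a b c d e f g h i j k l gf gt : ℝ)
    (ha : 0 ≤ a) (hb : 0 ≤ b) (hc : 0 ≤ c) (hd : 0 ≤ d)
    (he : 0 ≤ e) (hf : 0 ≤ f) (hg : 0 ≤ g) (hh : 0 ≤ h)
    (hi : 0 ≤ i) (hj : 0 ≤ j) (hk : 0 ≤ k) (hl : 0 ≤ l)
    (n1 : a + b + c + d = 1) (n2 : e + f + g + h = 1) (n3 : i + j + k + l = 1)
    (mA1 : a + b = e + f) (mA2 : c + d = g + h)
    (mB1 : e + g = i + k) (mB2 : f + h = j + l)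
    (hgf1 : -1 ≤ gf) (hgf2 : gf ≤ 1) (hgt1 : -1 ≤ gt) (hgt2 : gt ≤ 1) :
    2 * (a - b - c + d)
      + gf * ((a + b - c - d) + (e + f - g - h) - 2 * (i - j - k + l))
      + gt * (2 * (a - b + c - d) + 2 * (i - j - k + l)) ≤ 6 := by
  have b1 := mul_le_abs' hgf1 hgf2 (S := (a + b - c - d) + (e + f - g - h) - 2 * (i - j - k + l))
  have b2 := mul_le_abs' hgt1 hgt2 (S := 2 * (a - b + c - d) + 2 * (i - j - k + l))
  rcases abs_cases ((a + b - c - d) + (e + f - g - h) - 2 * (i - j - k + l)) with ⟨e1, _⟩ | ⟨e1, _⟩ <;>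
    rcases abs_cases (2 * (a - b + c - d) + 2 * (i - j - k + l)) with ⟨e2, _⟩ | ⟨e2, _⟩ <;>
      rw [e1] at b1 <;> rw [e2] at b2 <;> linarith

lemma core2 (a b c d e f g h i j k l m n o p q r s t bf bt : ℝ)
    (ha : 0 ≤ a) (hb : 0 ≤ b) (hc : 0 ≤ c) (hd : 0 ≤ d)
    (he : 0 ≤ e) (hf : 0 ≤ f) (hg : 0 ≤ g) (hh : 0 ≤ h)
    (hi : 0 ≤ i) (hj : 0 ≤ j) (hk : 0 ≤ k) (hl : 0 ≤ l)
    (hm : 0 ≤ m) (hn : 0 ≤ n) (ho : 0 ≤ o) (hp : 0 ≤ p)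
    (hq : 0 ≤ q) (hr : 0 ≤ r) (hs : 0 ≤ s) (ht : 0 ≤ t)
    (n1 : a + b + c + d = 1) (n2 : e + f + g + h = 1) (n3 : i + j + k + l = 1)
    (n4 : m + n + o + p = 1) (n5 : q + r + s + t = 1)
    (mA1 : a + b = e + f) (mA2 : a + b = i + j)
    (mA3 : c + d = g + h) (mA4 : c + d = k + l)
    (mA5 : m + n = q + r) (mA6 : o + p = s + t)
    (mC1 : a + c = e + g) (mC2 : a + c = m + o)
    (mC3 : b + d = f + h) (mC4 : b + d = n + p)
    (mC5 : i + k = q + s) (mC6 : j + l = r + t)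
    (hbf1 : -1 ≤ bf) (hbf2 : bf ≤ 1) (hbt1 : -1 ≤ bt) (hbt2 : bt ≤ 1) :
    bf * (2 * (a + b - c - d) + 2 * (i - j + k - l))
      + (a - b - c + d) + (e - f - g + h)
      + bt * (2 * (q - r - s + t) - 2 * (m - n - o + p)) ≤ 6 := by
  have b1 := mul_le_abs' hbf1 hbf2 (S := 2 * (a + b - c - d) + 2 * (i - j + k - l))
  have b2 := mul_le_abs' hbt1 hbt2 (S := 2 * (q - r - s + t) - 2 * (m - n - o + p))
  rcases abs_cases (2 * (a + b - c - d) + 2 * (i - j + k - l)) with ⟨e1, _⟩ | ⟨e1, _⟩ <;>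
    rcases abs_cases (2 * (q - r - s + t) - 2 * (m - n - o + p)) with ⟨e2, _⟩ | ⟨e2, _⟩ <;>
      rw [e1] at b1 <;> rw [e2] at b2 <;> linarith

lemma core3 (a b c d e f g h i j k l m n o p af at' : ℝ)
    (ha : 0 ≤ a) (hb : 0 ≤ b) (hc : 0 ≤ c) (hd : 0 ≤ d)
    (he : 0 ≤ e) (hf : 0 ≤ f) (hg : 0 ≤ g) (hh : 0 ≤ h)
    (hi : 0 ≤ i) (hj : 0 ≤ j) (hk : 0 ≤ k) (hl : 0 ≤ l)
    (hm : 0 ≤ m) (hn : 0 ≤ n) (ho : 0 ≤ o) (hp : 0 ≤ p)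
    (n1 : a + b + c + d = 1) (n2 : e + f + g + h = 1)
    (n3 : i + j + k + l = 1) (n4 : m + n + o + p = 1)
    (mB1 : a + b = e + f) (mB2 : c + d = g + h)
    (mB3 : i + j = m + n) (mB4 : k + l = o + p)
    (mC1 : a + c = i + k) (mC2 : b + d = j + l)
    (mC3 : e + g = m + o) (mC4 : f + h = n + p)
    (haf1 : -1 ≤ af) (haf2 : af ≤ 1) (hat1 : -1 ≤ at') (hat2 : at' ≤ 1) :
    af * (2 * (a + b - c - d) + (a - b + c - d) + (i - j + k - l))
      + 2 * (e - f - g + h)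
      + at' * (2 * (m - n - o + p) - 2 * (i - j - k + l)) ≤ 6 := by
  have b1 := mul_le_abs' haf1 haf2 (S := 2 * (a + b - c - d) + (a - b + c - d) + (i - j + k - l))
  have b2 := mul_le_abs' hat1 hat2 (S := 2 * (m - n - o + p) - 2 * (i - j - k + l))
  rcases abs_cases (2 * (a + b - c - d) + (a - b + c - d) + (i - j + k - l)) with ⟨e1, _⟩ | ⟨e1, _⟩ <;>
    rcases abs_cases (2 * (m - n - o + p) - 2 * (i - j - k + l)) with ⟨e2, _⟩ | ⟨e2, _⟩ <;>
      rw [e1] at b1 <;> rw [e2] at b2 <;> linarith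

lemma comp1 (p : Bool → Bool → Bool → Bool → ℝ) (pc : Bool → Bool → ℝ)
    (hp : ∀ x y a b, 0 ≤ p x y a b) (hpn : ∀ x y, ∑ a, ∑ b, p x y a b = 1)
    (hA : ∀ x y y' a, ∑ b, p x y a b = ∑ b, p x y' a b)
    (hB : ∀ x x' y b, ∑ a, p x y a b = ∑ a, p x' y a b)
    (hcpos : ∀ z k, 0 ≤ pc z k) (hcn : ∀ z, ∑ k, pc z k = 1) :
    Jf (fun x y z a b k => p x y a b * pc z k) ≤ 6 := by
  have n00 := hpn false false; have n01 := hpn false true; have n11 := hpn true true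
  have eA0 := hA false false true false; have eA1 := hA false false true true
  have eB0 := hB false true true false; have eB1 := hB false true true true
  have c0 := hcn false; have c1 := hcn true
  simp only [Fintype.sum_bool] at n00 n01 n11 eA0 eA1 eB0 eB1 c0 c1
  have hJ : Jf (fun x y z a b k => p x y a b * pc z k) =
      2 * (p false false false false - p false false false true
            - p false false true false + p false false true true)
      + (pc false false - pc false true) *
          ((p false false false false + p false false false true
              - p false false true false - p false false true true)
            + (p false true false false + p false true false true
              - p false true true false - p false true true true)
            - 2 * (p true true false false - p true true false true
              - p true true true false + p true true true true))
      + (pc true false - pc true true) *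
          (2 * (p false false false false - p false false false true
              + p false false true false - p false false true true)
            + 2 * (p true true false false - p true true false true
              - p true true true false + p true true true true)) := by
    simp only [Jf, corr3, corrAB, corrBC, corrAC, Fintype.sum_bool, sgn_false, sgn_true]
    linear_combination (2 * (p false false false false - p false false false true
      - p false false true false + p false false true true)) * c0
  rw [hJ]
  exact core1 _ _ _ _ _ _ _ _ _ _ _ _ _ _
    (hp false false false false) (hp false false false true)
    (hp false false true false) (hp false false true true)
    (hp false true false false) (hp false true false true)
    (hp false true true false) (hp false true true true)
    (hp true true false false) (hp true true false true)
    (hp true true true false) (hp true true true true)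
    (by linarith) (by linarith) (by linarith)
    (by linarith) (by linarith) (by linarith) (by linarith)
    (by linarith [hcpos false false, hcpos false true])
    (by linarith [hcpos false false, hcpos false true])
    (by linarith [hcpos true false, hcpos true true])
    (by linarith [hcpos true false, hcpos true true])

lemma comp2 (p : Bool → Bool → Bool → Bool → Bool → ℝ) (pb : Bool → Bool → ℝ)
    (hp : ∀ x y z a c, 0 ≤ p x y z a c) (hpn : ∀ x y z, ∑ a, ∑ c, p x y z a c = 1)
    (hA : ∀ x y y' z z' a, ∑ c, p x y z a c = ∑ c, p x y' z' a c)
    (hC : ∀ x x' y y' z c, ∑ a, p x y z a c = ∑ a, p x' y' z a c)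
    (hbpos : ∀ y b, 0 ≤ pb y b) (hbn : ∀ y, ∑ b, pb y b = 1) :
    Jf (fun x y z a b c => p x y z a c * pb y b) ≤ 6 := by
  have n1 := hpn false false false; have n2 := hpn false true false
  have n3 := hpn false false true; have n4 := hpn true true false
  have n5 := hpn true true true
  have mA1 := hA false false true false false false
  have mA2 := hA false false false false true false
  have mA3 := hA false false true false false true
  have mA4 := hA false false false false true true
  have mA5 := hA true true true false true false
  have mA6 := hA true true true false true true
  have mC1 := hC false false false true false false
  have mC2 := hC false true false true false false
  have mC3 := hC false false false true false true
  have mC4 := hC false true false true false true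
  have mC5 := hC false true false true true false
  have mC6 := hC false true false true true true
  have b0 := hbn false; have b1 := hbn true
  simp only [Fintype.sum_bool] at n1 n2 n3 n4 n5 mA1 mA2 mA3 mA4 mA5 mA6
  simp only [Fintype.sum_bool] at mC1 mC2 mC3 mC4 mC5 mC6 b0 b1
  have hJ : Jf (fun x y z a b c => p x y z a c * pb y b) =
      (pb false false - pb false true) *
        (2 * (p false false false false false + p false false false false true
            - p false false false true false - p false false false true true)
          + 2 * (p false false true false false - p false false true false true
            + p false false true true false - p false false true true true))
      + (p false false false false false - p false false false false true
          - p false false false true false + p false false false true true)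
      + (p false true false false false - p false true false false true
          - p false true false true false + p false true false true true)
      + (pb true false - pb true true) *
        (2 * (p true true true false false - p true true true false true
            - p true true true true false + p true true true true true)
          - 2 * (p true true false false false - p true true false false true
            - p true true false true false + p true true false true true)) := by
    simp only [Jf, corr3, corrAB, corrBC, corrAC, Fintype.sum_bool, sgn_false, sgn_true]
    linear_combination (p false false false false false - p false false false false true
        - p false false false true false + p false false false true true) * b0
      + (p false true false false false - p false true false false true
        - p false true false true false + p false true false true true) * b1
  rw [hJ]
  exact core2 _ _ _ _ _ _ _ _ _ _ _ _ _ _ _ _ _ _ _ _ _ _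
    (hp false false false false false) (hp false false false false true)
    (hp false false false true false) (hp false false false true true)
    (hp false true false false false) (hp false true false false true)
    (hp false true false true false) (hp false true false true true)
    (hp false false true false false) (hp false false true false true)
    (hp false false true true false) (hp false false true true true)
    (hp true true false false false) (hp true true false false true)
    (hp true true false true false) (hp true true false true true)
    (hp true true true false false) (hp true true true false true)
    (hp true true true true false) (hp true true true true true)
    (by linarith) (by linarith) (by linarith) (by linarith) (by linarith)
    (by linarith) (by linarith) (by linarith) (by linarith) (by linarith) (by linarith)
    (by linarith) (by linarith) (by linarith) (by linarith) (by linarith) (by linarith)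
    (by linarith [hbpos false false, hbpos false true])
    (by linarith [hbpos false false, hbpos false true])
    (by linarith [hbpos true false, hbpos true true])
    (by linarith [hbpos true false, hbpos true true])

lemma comp3 (p : Bool → Bool → Bool → Bool → ℝ) (pa : Bool → Bool → ℝ)
    (hp : ∀ y z b c, 0 ≤ p y z b c) (hpn : ∀ y z, ∑ b, ∑ c, p y z b c = 1)
    (hB : ∀ y z z' b, ∑ c, p y z b c = ∑ c, p y z' b c)
    (hC : ∀ y y' z c, ∑ b, p y z b c = ∑ b, p y' z b c)
    (hapos : ∀ x a, 0 ≤ pa x a) (han : ∀ x, ∑ a, pa x a = 1) :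
    Jf (fun x y z a b c => p y z b c * pa x a) ≤ 6 := by
  have n1 := hpn false false; have n2 := hpn false true
  have n3 := hpn true false; have n4 := hpn true true
  have mB1 := hB false false true false
  have mB2 := hB false false true true
  have mB3 := hB true false true false
  have mB4 := hB true false true true
  have mC1 := hC false true false false
  have mC2 := hC false true false true
  have mC3 := hC false true true false
  have mC4 := hC false true true true
  have a0 := han false; have a1 := han true
  simp only [Fintype.sum_bool] at n1 n2 n3 n4 mB1 mB2 mB3 mB4 mC1 mC2 mC3 mC4 a0 a1
  have hJ : Jf (fun x y z a b c => p y z b c * pa x a) =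
      (pa false false - pa false true) *
        (2 * (p false false false false + p false false false true
            - p false false true false - p false false true true)
          + (p false false false false - p false false false true
            + p false false true false - p false false true true)
          + (p true false false false - p true false false true
            + p true false true false - p true false true true))
      + 2 * (p false true false false - p false true false true
          - p false true true false + p false true true true)
      + (pa true false - pa true true) *
        (2 * (p true true false false - p true true false true
            - p true true true false + p true true true true)
          - 2 * (p true false false false - p true false false true
            - p true false true false + p true false true true)) := by
    simp only [Jf, corr3, corrAB, corrBC, corrAC, Fintype.sum_bool, sgn_false, sgn_true]
    linear_combination (2 * (p false true false false - p false true false true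
        - p false true true false + p false true true true)) * a0
  rw [hJ]
  exact core3 _ _ _ _ _ _ _ _ _ _ _ _ _ _ _ _ _ _
    (hp false false false false) (hp false false false true)
    (hp false false true false) (hp false false true true)
    (hp false true false false) (hp false true false true)
    (hp false true true false) (hp false true true true)
    (hp true false false false) (hp true false false true)
    (hp true false true false) (hp true false true true)
    (hp true true false false) (hp true true false true)
    (hp true true true false) (hp true true true true)
    (by linarith) (by linarith) (by linarith) (by linarith)
    (by linarith) (by linarith) (by linarith) (by linarith)
    (by linarith) (by linarith) (by linarith) (by linarith)
    (by linarith [hapos false false, hapos false true])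
    (by linarith [hapos false false, hapos false true])
    (by linarith [hapos true false, hapos true true])
    (by linarith [hapos true false, hapos true true])

theorem rcbl_inequality
    (P : Bool → Bool → Bool → Bool → Bool → Bool → ℝ)
    (hnonneg : ∀ x y z a b c, 0 ≤ P x y z a b c)
    (hsum : ∀ x y z, ∑ a, ∑ b, ∑ c, P x y z a b c = 1)
    (hRCBL : IsRCBL P) :
    2 * corrAB P false false
      + corrAC P false false false + corrAC P false false true
      + 2 * corrBC P false true
      - 2 * corr3 P true true false + 2 * corr3 P true true true ≤ 6 := by
  obtain ⟨r₁, r₂, r₃, n₁, n₂, n₃, q₁, PAB, PC, q₂, PAC, PB, q₃, PBC, PA,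
    hr₁, hr₂, hr₃, hrsum, hq₁, hq₁s, hq₂, hq₂s, hq₃, hq₃s,
    hABpos, hABnorm, hABns1, hABns2, hCpos, hCnorm,
    hACpos, hACnorm, hACns1, hACns2, hBpos, hBnorm,
    hBCpos, hBCnorm, hBCns1, hBCns2, hApos, hAnorm, hdec⟩ := hRCBL
  have hPG : P = fun x y z a b c =>
      r₁ * (∑ l, q₁ l * (fun l x y z a b c => PAB l x y a b * PC l z c) l x y z a b c)
      + r₂ * (∑ g, q₂ g * (fun g x y z a b c => PAC g x y z a c * PB g y b) g x y z a b c)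
      + r₃ * (∑ u, q₃ u * (fun u x y z a b c => PBC u y z b c * PA u x a) u x y z a b c) := by
    funext x y z a b c
    exact hdec x y z a b c
  show Jf P ≤ 6
  rw [hPG, Jf_comb, Jf_mix, Jf_mix, Jf_mix]
  have T1 : ∑ l, q₁ l * Jf ((fun l x y z a b c => PAB l x y a b * PC l z c) l) ≤ 6 :=
    sum_bound q₁ _ hq₁ hq₁s fun l =>
      comp1 (PAB l) (PC l) (hABpos l) (hABnorm l) (hABns1 l) (hABns2 l) (hCpos l) (hCnorm l)
  have T2 : ∑ g, q₂ g * Jf ((fun g x y z a b c => PAC g x y z a c * PB g y b) g) ≤ 6 :=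
    sum_bound q₂ _ hq₂ hq₂s fun g =>
      comp2 (PAC g) (PB g) (hACpos g) (hACnorm g) (hACns1 g) (hACns2 g) (hBpos g) (hBnorm g)
  have T3 : ∑ u, q₃ u * Jf ((fun u x y z a b c => PBC u y z b c * PA u x a) u) ≤ 6 :=
    sum_bound q₃ _ hq₃ hq₃s fun u =>
      comp3 (PBC u) (PA u) (hBCpos u) (hBCnorm u) (hBCns1 u) (hBCns2 u) (hApos u) (hAnorm u)
  nlinarith [mul_le_mul_of_nonneg_left T1 hr₁, mul_le_mul_of_nonneg_left T2 hr₂,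
    mul_le_mul_of_nonneg_left T3 hr₃, hrsum, hr₁, hr₂, hr₃]
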